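/- arXiv:1606.00238 — 7 statements merged into one kernel-verified Lean document; each statement's English description precedes it below -/
import Mathlib

section
/- Let A be a real n×n matrix such that every 2×2 minor is tropically nonnegative, i.e., A(i,k) + A(j,l) ≥ A(i,l) + A(j,k) for all i < j and k < l (Monge property). Then for every subset I ⊆ [n] and every cyclic permutation γ of I, the sum Σ_{j∈I} A(j, γ(j)) ≤ Σ_{j∈I} A(j,j). In particular, the identity permutation attains the tropical permanent of A: max_{σ ∈ S_n} Σ_i A(i,σ(i)) = Σ_i A(i,i). -/
/-!
An uncrossing argument. If `σ ≠ 1`, let `a` be the largest point moved by `σ` and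
`b = σ⁻¹ a`; then `σ a < a` and `b < a`, so the Monge inequality for rows `b < a` and
columns `σ a < a` says that rerouting `b ↦ σ a`, `a ↦ a` (the permutation
`swap a (σ a) * σ`) does not decrease the weight, while it fixes `a` and so shrinks the
support. Induction on the support gives `∑ i, A i (σ i) ≤ ∑ i, A i i`, and cancelling the
common fixed-point terms gives the bound on the support of `σ`, in particular for cycles.
-/

open Equiv Finset

namespace Equiv.Perm

variable {ι : Type*} [Fintype ι] [DecidableEq ι] [LinearOrder ι]

lemma apply_lt_of_forall_mem_support_le {σ : Perm ι} {a : ι} (ha : a ∈ σ.support)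
    (hmax : ∀ x ∈ σ.support, x ≤ a) : σ a < a :=
  (hmax _ (apply_mem_support.mpr ha)).lt_of_ne (mem_support.mp ha)

end Equiv.Perm

namespace Matrix

variable {m n R : Type*} [LinearOrder m] [LinearOrder n]

def IsMonge [Add R] [LE R] (A : Matrix m n R) : Prop :=
  ∀ i j k l, i < j → k < l → A i l + A j k ≤ A i k + A j l

variable [Fintype n] [DecidableEq n]

section OrderedAddMonoid

variable [AddCommMonoid R] [PartialOrder R] [IsOrderedAddMonoid R] {A : Matrix n n R}

theorem IsMonge.sum_apply_le_sum_swap_mul_apply (hA : A.IsMonge) {σ : Perm n} {a : n}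
    (hσa : σ a < a) (hσa' : σ⁻¹ a < a) :
    ∑ i, A i (σ i) ≤ ∑ i, A i ((Equiv.swap a (σ a) * σ) i) := by
  set b := σ⁻¹ a
  have hba : b ≠ a := hσa'.ne
  have hσb : σ b = a := σ.apply_symm_apply a
  have h_off : ∀ x ∈ ({a, b} : Finset n)ᶜ,
      A x (σ x) = A x ((Equiv.swap a (σ a) * σ) x) := by
    intro x hx
    simp only [mem_compl, mem_insert, mem_singleton, not_or] at hx
    rw [Perm.mul_apply, swap_apply_of_ne_of_ne (fun h ↦ hx.2 (σ.eq_inv_iff_eq.mpr h))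
      (σ.injective.ne hx.1)]
  rw [← sum_add_sum_compl {a, b}, ← sum_add_sum_compl {a, b}, sum_congr rfl h_off,
    sum_pair hba.symm, sum_pair hba.symm]
  gcongr ?_ + _
  simp only [Perm.mul_apply, swap_apply_left, hσb, swap_apply_right]
  rw [add_comm (A a (σ a)), add_comm (A a a)]
  exact hA b a (σ a) a hσa' hσa

theorem IsMonge.sum_apply_perm_le_sum_diag (hA : A.IsMonge) (σ : Perm n) :
    ∑ i, A i (σ i) ≤ ∑ i, A i i := by
  obtain rfl | hσ := eq_or_ne σ 1
  · rfl
  have hne : σ.support.Nonempty :=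
    nonempty_iff_ne_empty.mpr (Perm.support_eq_empty_iff.not.mpr hσ)
  set a := σ.support.max' hne
  have ha : a ∈ σ.support := max'_mem _ hne
  have hmax : ∀ x ∈ σ.support, x ≤ a := fun x hx ↦ le_max' _ x hx
  have hσa : σ a < a := Perm.apply_lt_of_forall_mem_support_le ha hmax
  have hσa' : σ⁻¹ a < a := by
    rw [← Perm.support_inv] at ha hmax
    exact Perm.apply_lt_of_forall_mem_support_le ha hmax
  calc ∑ i, A i (σ i) ≤ ∑ i, A i ((Equiv.swap a (σ a) * σ) i) :=
        hA.sum_apply_le_sum_swap_mul_apply hσa hσa'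
    _ ≤ ∑ i, A i i := hA.sum_apply_perm_le_sum_diag _
termination_by σ.support.card
decreasing_by exact Perm.card_support_swap_mul hσa.ne

end OrderedAddMonoid

theorem IsMonge.sum_support_apply_perm_le_sum_support_diag [AddCommMonoid R] [PartialOrder R]
    [IsOrderedCancelAddMonoid R] {A : Matrix n n R} (hA : A.IsMonge) (σ : Perm n) :
    ∑ j ∈ σ.support, A j (σ j) ≤ ∑ j ∈ σ.support, A j j := by
  have h_fixed : ∑ j ∈ σ.supportᶜ, A j (σ j) = ∑ j ∈ σ.supportᶜ, A j j :=
    sum_congr rfl fun j hj ↦ by rw [Perm.notMem_support.mp (mem_compl.mp hj)]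
  have h := hA.sum_apply_perm_le_sum_diag σ
  rw [← sum_add_sum_compl σ.support, ← sum_add_sum_compl σ.support (fun j ↦ A j j),
    h_fixed] at h
  exact le_of_add_le_add_right h

end Matrix

/-- For a real Monge matrix, every cycle's weight is dominated by the weight of the
diagonal on its support; in particular the identity attains the tropical permanent. -/
theorem monge_identity_attains_tropical_permanent (n : ℕ) (A : Matrix (Fin n) (Fin n) ℝ)
    (hMonge : ∀ i j k l : Fin n, i < j → k < l → A i l + A j k ≤ A i k + A j l) :
    (∀ γ : Equiv.Perm (Fin n), γ.IsCycle →
      ∑ j ∈ γ.support, A j (γ j) ≤ ∑ j ∈ γ.support, A j j) ∧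
    (∀ σ : Equiv.Perm (Fin n), ∑ i, A i (σ i) ≤ ∑ i, A i i) :=
  ⟨fun γ _ ↦ Matrix.IsMonge.sum_support_apply_perm_le_sum_support_diag hMonge γ,
    Matrix.IsMonge.sum_apply_perm_le_sum_diag hMonge⟩
end

section
/- Let A be a real n×n strict Monge matrix, i.e., A(i,k) + A(j,l) > A(i,l) + A(j,k) for all i < j and k < l. Then for every permutation σ ≠ id of [n], Σ_i A(i,σ(i)) < Σ_i A(i,i); that is, the identity is the unique permutation attaining the tropical permanent. -/
/-!
If a permutation `σ ≠ 1` has an inversion `i < j`, `σ j < σ i`, then composing it with the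
transposition `(i j)` strictly increases `∑ i, A i (σ i)`: the two changed entries form a
`2 × 2` minor on which the strict Monge inequality applies. Hence no permutation other than the
identity can maximize the sum, and since a maximizer exists, the identity is the strict maximum.
-/

open Finset Equiv

theorem Finite.lt_apply_of_forall_ne_exists_lt {β R : Type*} [Finite β] [LinearOrder R]
    {f : β → R} {a : β} (himprove : ∀ x ≠ a, ∃ y, f x < f y) {x : β} (hx : x ≠ a) :
    f x < f a := by
  have : Nonempty β := ⟨a⟩
  obtain ⟨m, hm⟩ := Finite.exists_max f
  have hma : m = a := by
    by_contra hne
    obtain ⟨y, hy⟩ := himprove m hne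
    exact (hm y).not_gt hy
  obtain ⟨y, hy⟩ := himprove x hx
  exact hma ▸ hy.trans_le (hm y)

theorem Equiv.Perm.exists_lt_apply_lt_of_ne_one {α : Type*} [LinearOrder α] [Finite α]
    {σ : Perm α} (hσ : σ ≠ 1) : ∃ i j, i < j ∧ σ j < σ i := by
  contrapose! hσ
  have hmono : StrictMono σ := fun i j hij =>
    (hσ i j hij).lt_of_ne fun h => hij.ne (σ.injective h)
  have hrefl : hmono.orderIsoOfSurjective σ σ.surjective = OrderIso.refl α :=
    Subsingleton.elim _ _
  exact Equiv.ext fun i => DFunLike.congr_fun hrefl i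

theorem Equiv.Perm.sum_mul_swap_add {ι R : Type*} [Fintype ι] [DecidableEq ι] [AddCommMonoid R]
    (f : ι → ι → R) (σ : Perm ι) {i j : ι} (hij : i ≠ j) :
    ∑ k, f k ((σ * swap i j) k) + (f i (σ i) + f j (σ j)) =
      ∑ k, f k (σ k) + (f i (σ j) + f j (σ i)) := by
  have hcompl : ∑ k ∈ ({i, j} : Finset ι)ᶜ, f k ((σ * swap i j) k) =
      ∑ k ∈ ({i, j} : Finset ι)ᶜ, f k (σ k) := by
    refine sum_congr rfl fun k hk => ?_
    simp only [mem_compl, mem_insert, mem_singleton, not_or] at hk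
    rw [Perm.mul_apply, swap_apply_of_ne_of_ne hk.1 hk.2]
  rw [← sum_add_sum_compl {i, j}, ← sum_add_sum_compl {i, j} (fun k => f k (σ k)),
    sum_pair hij, sum_pair hij, hcompl, Perm.mul_apply, Perm.mul_apply, swap_apply_left,
    swap_apply_right]
  abel

def Matrix.IsStrictMonge {ι R : Type*} [LinearOrder ι] [Add R] [LT R] (A : Matrix ι ι R) : Prop :=
  ∀ i j k l : ι, i < j → k < l → A i l + A j k < A i k + A j l

theorem Matrix.IsStrictMonge.sum_lt_sum_mul_swap {ι R : Type*} [Fintype ι] [LinearOrder ι]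
    [AddCommMonoid R] [PartialOrder R] [IsOrderedCancelAddMonoid R] {A : Matrix ι ι R}
    (hA : A.IsStrictMonge) (σ : Perm ι) {i j : ι} (hij : i < j) (hinv : σ j < σ i) :
    ∑ k, A k (σ k) < ∑ k, A k ((σ * Equiv.swap i j) k) := by
  refine lt_of_add_lt_add_right (a := A i (σ i) + A j (σ j)) ?_
  rw [σ.sum_mul_swap_add A hij.ne]
  exact (add_lt_add_iff_left _).2 (hA i j (σ j) (σ i) hij hinv)

/-- For a real strict Monge matrix, the identity is the unique permutation
attaining the tropical permanent. -/
theorem strict_monge_identity_unique_max (n : ℕ) (A : Matrix (Fin n) (Fin n) ℝ)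
    (hMonge : ∀ i j k l : Fin n, i < j → k < l → A i l + A j k < A i k + A j l) :
    ∀ σ : Equiv.Perm (Fin n), σ ≠ 1 → ∑ i, A i (σ i) < ∑ i, A i i := by
  intro σ hσ
  refine Finite.lt_apply_of_forall_ne_exists_lt (f := fun τ : Perm (Fin n) => ∑ i, A i (τ i))
    (fun τ hτ => ?_) hσ
  obtain ⟨i, j, hij, hinv⟩ := τ.exists_lt_apply_lt_of_ne_one hτ
  exact ⟨τ * swap i j, Matrix.IsStrictMonge.sum_lt_sum_mul_swap hMonge τ hij hinv⟩
end

section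
/- Let A be a real n×n Monge matrix. Then A is tropically totally nonnegative, meaning that for every square submatrix A_{I,J} (rows I, columns J listed in increasing order, |I|=|J|), either there exist two permutations of maximal weight of opposite parity, or all permutations of maximal weight are even. -/
lemma perm_eq_one_of_strictMono {k : ℕ} (f : Equiv.Perm (Fin k))
    (h : StrictMono (f : Fin k → Fin k)) : f = 1 := by
  haveI inst : WellFoundedLT (Fin k) := inferInstance
  have h2 : StrictMono (f.symm : Fin k → Fin k) := fun a b hab => by
    rw [← h.lt_iff_lt]; simpa using hab
  ext i
  have h1 : (i : Fin k) ≤ f i := @StrictMono.le_apply (Fin k) _ inst _ h i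
  have h3 : (f i : Fin k) ≤ f.symm (f i) := @StrictMono.le_apply (Fin k) _ inst _ h2 (f i)
  simp only [Equiv.symm_apply_apply] at h3
  exact congrArg Fin.val (le_antisymm h3 h1)

lemma sum_two_decomp {M : Type*} [AddCommMonoid M] {k : ℕ} (a b : Fin k) (hab : a ≠ b)
    (f : Fin k → M) :
    ∑ x, f x = ∑ x ∈ (Finset.univ.erase a).erase b, f x + f b + f a := by
  rw [← Finset.sum_erase_add Finset.univ f (Finset.mem_univ a),
    ← Finset.sum_erase_add (Finset.univ.erase a) f
      (Finset.mem_erase.mpr ⟨hab.symm, Finset.mem_univ b⟩)]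

/-- If `π ≠ 1` it has an inversion, whose swap weakly improves the weight and strictly
increases the measure `∑ i * π i`. -/
lemma monge_step {k : ℕ} (B : Matrix (Fin k) (Fin k) ℝ)
    (hM : ∀ i j p q : Fin k, i < j → p < q → B i q + B j p ≤ B i p + B j q)
    (π : Equiv.Perm (Fin k)) (hπ : π ≠ 1) :
    ∃ τ : Equiv.Perm (Fin k),
      (∑ i : Fin k, (i : ℕ) * ((π i : Fin k) : ℕ)) < (∑ i : Fin k, (i : ℕ) * ((τ i : Fin k) : ℕ)) ∧
      ∑ i, B i (π i) ≤ ∑ i, B i (τ i) := by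
  have hns : ¬ StrictMono (π : Fin k → Fin k) := fun h => hπ (perm_eq_one_of_strictMono π h)
  rw [StrictMono] at hns
  push_neg at hns
  obtain ⟨a, b, hab, hba⟩ := hns
  have habne : a ≠ b := ne_of_lt hab
  have hlt : π b < π a :=
    lt_of_le_of_ne hba (fun h => habne (π.injective h).symm)
  have hfix : ∀ x ∈ (Finset.univ.erase a).erase b, (π * Equiv.swap a b) x = π x := by
    intro x hx
    simp only [Finset.mem_erase] at hx
    simp [Equiv.Perm.mul_apply, Equiv.swap_apply_of_ne_of_ne hx.2.1 hx.1]
  have hb' : (π * Equiv.swap a b) b = π a := by simp [Equiv.Perm.mul_apply]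
  have ha' : (π * Equiv.swap a b) a = π b := by simp [Equiv.Perm.mul_apply]
  refine ⟨π * Equiv.swap a b, ?_, ?_⟩
  · rw [sum_two_decomp a b habne (fun x => (x : ℕ) * ((π x : Fin k) : ℕ)),
      sum_two_decomp a b habne (fun x => (x : ℕ) * (((π * Equiv.swap a b) x : Fin k) : ℕ))]
    rw [Finset.sum_congr rfl (fun x hx => by rw [hfix x hx] :
      ∀ x ∈ (Finset.univ.erase a).erase b,
        (x : ℕ) * (((π * Equiv.swap a b) x : Fin k) : ℕ) = (x : ℕ) * ((π x : Fin k) : ℕ)),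
      hb', ha']
    have h1 : (a : ℕ) < (b : ℕ) := hab
    have h2 : ((π b : Fin k) : ℕ) < ((π a : Fin k) : ℕ) := hlt
    nlinarith
  · rw [sum_two_decomp a b habne (fun x => B x (π x)),
      sum_two_decomp a b habne (fun x => B x ((π * Equiv.swap a b) x))]
    rw [Finset.sum_congr rfl (fun x hx => by rw [hfix x hx] :
      ∀ x ∈ (Finset.univ.erase a).erase b,
        B x ((π * Equiv.swap a b) x) = B x (π x)),
      hb', ha']
    have := hM a b (π b) (π a) hab hlt
    linarith

/-- In a Monge matrix the identity permutation has maximal weight. -/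
lemma monge_id_max {k : ℕ} (B : Matrix (Fin k) (Fin k) ℝ)
    (hM : ∀ i j p q : Fin k, i < j → p < q → B i q + B j p ≤ B i p + B j q) :
    ∀ π : Equiv.Perm (Fin k), ∑ i, B i (π i) ≤ ∑ i, B i i := by
  set m : Equiv.Perm (Fin k) → ℕ := fun π => ∑ i : Fin k, (i : ℕ) * ((π i : Fin k) : ℕ) with hm
  have mbound : ∀ π, m π ≤ k * k * k := by
    intro π
    calc m π ≤ ∑ _i : Fin k, k * k :=
          Finset.sum_le_sum (fun i _ => Nat.mul_le_mul (le_of_lt i.isLt) (le_of_lt (π i).isLt))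
      _ = k * (k * k) := by simp [Finset.sum_const, mul_comm]
      _ = k * k * k := by ring
  suffices H : ∀ N : ℕ, ∀ π : Equiv.Perm (Fin k), k * k * k - m π ≤ N →
      ∑ i, B i (π i) ≤ ∑ i, B i i by
    intro π; exact H (k * k * k) π (Nat.sub_le _ _)
  intro N
  induction N with
  | zero =>
    intro π hπ
    rcases eq_or_ne π 1 with h1 | h1
    · subst h1; simp
    · obtain ⟨τ, hmlt, _⟩ := monge_step B hM π h1
      have h2 : m π < m τ := hmlt
      have h3 := mbound τ
      omega
  | succ N ih =>
    intro π hπ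
    rcases eq_or_ne π 1 with h1 | h1
    · subst h1; simp
    · obtain ⟨τ, hmlt, hle⟩ := monge_step B hM π h1
      have hτb := mbound τ
      have h2 : m π < m τ := hmlt
      have : k * k * k - m τ ≤ N := by omega
      exact le_trans hle (ih τ this)

/-- A real Monge matrix is tropically totally nonnegative: for every square submatrix,
either there are two maximizing permutations of opposite parity, or every maximizing
permutation is even. -/
theorem monge_is_tropically_totally_nonnegative (n : ℕ) (A : Matrix (Fin n) (Fin n) ℝ)
    (hMonge : ∀ i j k l : Fin n, i < j → k < l → A i l + A j k ≤ A i k + A j l)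
    (k : ℕ) (r c : Fin k → Fin n) (hr : StrictMono r) (hc : StrictMono c) :
    (∃ σ τ : Equiv.Perm (Fin k),
      (∀ π : Equiv.Perm (Fin k), ∑ i, A (r i) (c (π i)) ≤ ∑ i, A (r i) (c (σ i))) ∧
      (∀ π : Equiv.Perm (Fin k), ∑ i, A (r i) (c (π i)) ≤ ∑ i, A (r i) (c (τ i))) ∧
      Equiv.Perm.sign σ ≠ Equiv.Perm.sign τ) ∨
    (∀ σ : Equiv.Perm (Fin k),
      (∀ π : Equiv.Perm (Fin k), ∑ i, A (r i) (c (π i)) ≤ ∑ i, A (r i) (c (σ i))) →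
      Equiv.Perm.sign σ = 1) := by
  set B : Matrix (Fin k) (Fin k) ℝ := fun x y => A (r x) (c y) with hB
  have hBM : ∀ i j p q : Fin k, i < j → p < q → B i q + B j p ≤ B i p + B j q :=
    fun i j p q hij hpq => hMonge (r i) (r j) (c p) (c q) (hr hij) (hc hpq)
  have hid := monge_id_max B hBM
  by_cases hall : ∀ σ : Equiv.Perm (Fin k),
      (∀ π : Equiv.Perm (Fin k), ∑ i, A (r i) (c (π i)) ≤ ∑ i, A (r i) (c (σ i))) →
      Equiv.Perm.sign σ = 1
  · exact Or.inr hall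
  · push_neg at hall
    obtain ⟨σ, hσmax, hσsign⟩ := hall
    refine Or.inl ⟨σ, 1, hσmax, ?_, ?_⟩
    · intro π
      simpa using hid π
    · simpa using hσsign
end

section
/- Let C ≥ 1 and let B be a positive n×n real matrix with B(i,i) = 1 for all i and B(i,j)·B(i',j') ≥ C·B(i,j')·B(i',j) for all i < i' and j < j'. Then for every subset I of [n] with |I| = k ≥ 2 and every cyclic permutation γ of I, Π_{j∈I} B(j,γ(j)) ≤ C^{-(k-1)} · Π_{j∈I} B(j,j) = C^{-(k-1)}. -/
/-!
Let `b` be the largest element of the cycle `γ`, entered from `a` and left towards `c`.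
Since `a, c < b` and `B b b = 1`, the `TN_{2,C}` inequality for rows `a < b` and columns
`c < b` reads `C · B a b · B b c ≤ B a c`: short-cutting `a → b → c` to `a → c` gains a
factor `C` and yields a cycle on one element fewer. After `k - 2` such steps one is left with
a transposition `x ↔ y`, for which the same inequality gives `C · B x y · B y x ≤ 1`.
-/

open Finset Equiv Equiv.Perm

/-- Short-cutting `σ⁻¹ b → b → σ b` to `σ⁻¹ b → σ b` removes `b` from the cycle. -/
theorem Equiv.Perm.prod_support_mul_eq_prod_support_swap_mul {α M : Type*} [DecidableEq α]
    [Fintype α] [CommMonoid M] (f : α → α → M) {σ : Perm α} {b : α} (hb : σ (σ b) ≠ b) :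
    (∏ j ∈ σ.support, f j (σ j)) * f (σ⁻¹ b) (σ b) =
      f (σ⁻¹ b) b * f b (σ b) *
        ∏ j ∈ (swap b (σ b) * σ).support, f j ((swap b (σ b) * σ) j) := by
  set τ := swap b (σ b) * σ
  set a := σ⁻¹ b
  have hσa : σ a = b := σ.apply_symm_apply b
  have hσb : σ b ≠ b := fun h => hb (by rw [h, h])
  have hab : a ≠ b := fun h => hσb (by rw [← h, hσa, h])
  have hτsupp : τ.support = σ.support.erase b := by
    rw [support_swap_mul_eq σ b hb, sdiff_singleton_eq_erase]
  have ha : a ∈ τ.support := by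
    rw [hτsupp, mem_erase, mem_support, hσa]; exact ⟨hab, hab.symm⟩
  have hτa : τ a = σ b := by
    rw [Perm.mul_apply, hσa, swap_apply_left]
  have hτ : ∀ j ∈ τ.support.erase a, τ j = σ j := by
    intro j hj
    rw [hτsupp, mem_erase, mem_erase] at hj
    refine swap_apply_of_ne_of_ne (fun h => hj.1 ?_) (fun h => hj.2.1 (σ.injective h))
    rw [← hσa] at h; exact σ.injective h
  rw [← insert_erase (mem_support.mpr hσb), ← hτsupp, prod_insert (by simp [hτsupp]),
    ← mul_prod_erase _ _ ha, ← mul_prod_erase _ _ ha, hσa, hτa,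
    prod_congr rfl fun j hj => congrArg (f j) (hτ j hj)]
  ac_rfl
section

variable {ι : Type*} [LinearOrder ι] {C : ℝ} {B : ι → ι → ℝ}

theorem tn2_detour_le (hdiag : ∀ i, B i i = 1)
    (h : ∀ i i' j j' : ι, i < i' → j < j' → C * (B i j' * B i' j) ≤ B i j * B i' j')
    {a b c : ι} (ha : a < b) (hc : c < b) : C * (B a b * B b c) ≤ B a c := by
  simpa only [hdiag b, mul_one] using h a b c b ha hc

theorem tn2_pow_mul_prod_cycle_le_one [Fintype ι] (hC : 0 ≤ C) (hpos : ∀ i j, 0 < B i j)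
    (hdiag : ∀ i, B i i = 1)
    (h : ∀ i i' j j' : ι, i < i' → j < j' → C * (B i j' * B i' j) ≤ B i j * B i' j')
    {γ : Perm ι} (hγ : γ.IsCycle) :
    C ^ (#γ.support - 1) * ∏ j ∈ γ.support, B j (γ j) ≤ 1 := by
  induction hk : #γ.support using Nat.strong_induction_on generalizing γ with
  | _ k ih =>
  have hne : γ.support.Nonempty := hγ.nonempty_support
  set b := γ.support.max' hne
  have hb : b ∈ γ.support := γ.support.max'_mem hne
  have hlt : ∀ x ∈ γ.support, x ≠ b → x < b := fun x hx hxb =>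
    lt_of_le_of_ne (γ.support.le_max' x hx) hxb
  have hγb : γ b ≠ b := mem_support.mp hb
  have hcb : γ b < b := hlt _ (apply_mem_support.mpr hb) hγb
  by_cases hb2 : γ (γ b) = b
  · rw [← hk, hγ.eq_swap_of_apply_apply_eq_self hγb hb2, support_swap hγb.symm,
      card_pair hγb.symm, prod_pair hγb.symm, swap_apply_left, swap_apply_right, pow_one]
    simpa only [hdiag, mul_comm (B (γ b) b)] using tn2_detour_le hdiag h hcb hcb
  set τ := swap b (γ b) * γ
  set a := γ⁻¹ b
  have hγa : γ a = b := γ.apply_symm_apply b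
  have hab : a < b := hlt _ (by rwa [← apply_mem_support, hγa])
    fun hab => hγb (by rw [← hab, hγa, hab])
  have hτ : τ.IsCycle := hγ.swap_mul hγb hb2
  have hτk : #τ.support = k - 1 := by
    rw [support_swap_mul_eq γ b hb2, sdiff_singleton_eq_erase, card_erase_of_mem hb, hk]
  have hk3 : 3 ≤ k := by have := hτ.two_le_card_support; omega
  have ih_τ := ih (k - 1) (by omega) hτ hτk
  refine (mul_le_iff_le_one_left (hpos a (γ b))).mp ?_
  calc C ^ (k - 1) * (∏ j ∈ γ.support, B j (γ j)) * B a (γ b)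
      = C ^ (k - 1 - 1) * (C * (B a b * B b (γ b))) * ∏ j ∈ τ.support, B j (τ j) := by
        rw [mul_assoc, prod_support_mul_eq_prod_support_swap_mul B hb2,
          ← pow_sub_one_mul (by omega : k - 1 ≠ 0)]
        ring
    _ ≤ C ^ (k - 1 - 1) * B a (γ b) * ∏ j ∈ τ.support, B j (τ j) := by
        gcongr
        · exact prod_nonneg fun j _ => (hpos _ _).le
        · exact tn2_detour_le hdiag h hab hcb
    _ = B a (γ b) * (C ^ (k - 1 - 1) * ∏ j ∈ τ.support, B j (τ j)) := by ring
    _ ≤ B a (γ b) := mul_le_of_le_one_right (hpos _ _).le ih_τ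

end

/-- For a positive matrix in TN_{2,C} with unit diagonal, the product of entries
along any cycle is at most C^{-(k-1)} times the corresponding diagonal product,
the latter being equal to 1. -/
theorem cycle_product_bound (n : ℕ) (C : ℝ) (hC : 1 ≤ C) (B : Matrix (Fin n) (Fin n) ℝ)
    (hpos : ∀ i j, 0 < B i j) (hdiag : ∀ i, B i i = 1)
    (h : ∀ i i' j j' : Fin n, i < i' → j < j' → C * (B i j' * B i' j) ≤ B i j * B i' j') :
    ∀ γ : Equiv.Perm (Fin n), γ.IsCycle →
      ∏ j ∈ γ.support, B j (γ j) ≤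
        (1 / C ^ (γ.support.card - 1)) * ∏ j ∈ γ.support, B j j ∧
      ∏ j ∈ γ.support, B j j = 1 := by
  intro γ hγ
  have hdiag_prod : ∏ j ∈ γ.support, B j j = 1 := prod_eq_one fun j _ => hdiag j
  refine ⟨?_, hdiag_prod⟩
  rw [hdiag_prod, mul_one, le_div_iff₀' (by positivity)]
  exact tn2_pow_mul_prod_cycle_le_one (by positivity) hpos hdiag h hγ
end

section
/- Let n ≥ 2 and C ≥ (n-1)². If A is a real n×n matrix with positive entries such that A(i,j)·A(i',j') ≥ C·A(i,j')·A(i',j) for all i < i' and j < j', then det(A) ≥ 0. If moreover all these inequalities are strict, then det(A) > 0. -/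
/-!
Write `det A = ∑_{sign σ = 1} p σ - ∑_{sign σ = -1} p σ` with `p σ = ∏ i, A (σ i) i`.
A permutation `σ ≠ 1` has an inversion `j < j'`, `σ j' < σ j`, and the `TN_{2,C}` inequality
for the rows `σ j' < σ j` and the columns `j < j'` gives `C * p σ ≤ p (σ * swap j j')`.
Bounding this single term by the sum over all `(n choose 2)` pairs `j < j'`, and using that right
multiplication by a transposition maps odd permutations bijectively onto even ones, we get
`C * ∑_odd p ≤ (n choose 2) * ∑_even p ≤ C * ∑_even p`, since `n choose 2 ≤ (n - 1)²` for `n ≥ 2`.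
-/

open Equiv Finset

namespace Matrix

variable {α R : Type*}

def IsTN2 [LT α] [Mul R] [LE R] (C : R) (A : Matrix α α R) : Prop :=
  ∀ i i' j j', i < i' → j < j' → C * (A i j' * A i' j) ≤ A i j * A i' j'

def IsTP2 [LT α] [Mul R] [LT R] (C : R) (A : Matrix α α R) : Prop :=
  ∀ i i' j j', i < i' → j < j' → C * (A i j' * A i' j) < A i j * A i' j'

end Matrix

namespace Equiv.Perm

variable {α M : Type*} [Fintype α] [AddCommMonoid M]

lemma ne_one_of_sign_eq_neg_one [DecidableEq α] {σ : Perm α} (hσ : sign σ = -1) : σ ≠ 1 := by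
  rintro rfl
  simp at hσ

lemma sum_sign_eq_neg_one_mul_swap [DecidableEq α] (f : Perm α → M) {a b : α} (hab : a ≠ b) :
    ∑ σ with sign σ = -1, f (σ * swap a b) = ∑ σ with sign σ = 1, f σ := by
  rw [sum_filter, sum_filter, ← Equiv.sum_comp (Equiv.mulRight (swap a b))]
  refine sum_congr rfl fun σ _ => ?_
  simp [sign_mul, sign_swap hab, neg_eq_iff_eq_neg]

variable [LinearOrder α]

lemma sum_sign_eq_neg_one_sum_swap (f : Perm α → M) :
    ∑ σ with sign σ = -1, ∑ q : α × α with q.1 < q.2, f (σ * swap q.1 q.2) =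
      (Fintype.card α).choose 2 • ∑ σ with sign σ = 1, f σ := by
  rw [sum_comm, ← Fintype.card_product_filter_lt, ← sum_const]
  exact sum_congr rfl fun q hq => sum_sign_eq_neg_one_mul_swap f (mem_filter.1 hq).2.ne

lemma exists_inversion_of_ne_one {σ : Perm α} (hσ : σ ≠ 1) : ∃ j j', j < j' ∧ σ j' < σ j := by
  by_contra! hmono
  have : StrictMono σ := fun a b hab => (hmono a b hab).lt_of_ne (σ.injective.ne hab.ne)
  exact hσ (DFunLike.ext' ((this.range_inj strictMono_id).1 (by simp)))

end Equiv.Perm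

namespace Matrix

variable {α R : Type*}

section permProd

variable [Fintype α]

def permProd [CommMonoid R] (A : Matrix α α R) (σ : Perm α) : R := ∏ i, A (σ i) i

lemma permProd_nonneg [CommSemiring R] [PartialOrder R] [IsOrderedRing R]
    {A : Matrix α α R} (hA : ∀ i j, 0 ≤ A i j) (σ : Perm α) : 0 ≤ A.permProd σ :=
  prod_nonneg fun _ _ => hA _ _

lemma permProd_pos [CommSemiring R] [PartialOrder R] [IsStrictOrderedRing R]
    {A : Matrix α α R} (hA : ∀ i j, 0 < A i j) (σ : Perm α) : 0 < A.permProd σ :=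
  prod_pos fun _ _ => hA _ _

variable [DecidableEq α]

lemma det_eq_sum_sign_eq_one_sub_sum_sign_eq_neg_one [CommRing R] (A : Matrix α α R) :
    A.det = ∑ σ with Perm.sign σ = 1, A.permProd σ - ∑ σ with Perm.sign σ = -1, A.permProd σ := by
  rw [det_apply', sum_filter, sum_filter, ← sum_sub_distrib]
  refine sum_congr rfl fun σ _ => ?_
  rcases Int.units_eq_one_or (Perm.sign σ) with h | h <;> simp [h, permProd]

variable [CommMonoid R] (A : Matrix α α R) (σ : Perm α) {j j' : α}

lemma permProd_eq_mul_prod_compl (hj : j ≠ j') :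
    A.permProd σ = A (σ j) j * A (σ j') j' * ∏ i ∈ {j, j'}ᶜ, A (σ i) i := by
  rw [permProd, ← prod_mul_prod_compl {j, j'}, prod_pair hj]

lemma permProd_mul_swap (hj : j ≠ j') :
    A.permProd (σ * Equiv.swap j j') = A (σ j') j * A (σ j) j' * ∏ i ∈ {j, j'}ᶜ, A (σ i) i := by
  rw [permProd_eq_mul_prod_compl A _ hj]
  congr 1
  · simp
  · refine prod_congr rfl fun i hi => ?_
    simp only [mem_compl, mem_insert, mem_singleton, not_or] at hi
    simp [swap_apply_of_ne_of_ne hi.1 hi.2]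

end permProd

variable [Fintype α] [LinearOrder α] [CommRing R] [LinearOrder R] [IsStrictOrderedRing R]
  {C : R} {A : Matrix α α R}

section swap

variable {σ : Perm α} {j j' : α} (hj : j < j') (hσ : σ j' < σ j)
include hj hσ

lemma IsTN2.mul_permProd_le (h : A.IsTN2 C) (hA : ∀ i j, 0 ≤ A i j) :
    C * A.permProd σ ≤ A.permProd (σ * Equiv.swap j j') := by
  rw [permProd_mul_swap A σ hj.ne, permProd_eq_mul_prod_compl A σ hj.ne, ← mul_assoc]
  refine mul_le_mul_of_nonneg_right ?_ (prod_nonneg fun _ _ => hA _ _)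
  simpa only [mul_comm (A (σ j) j)] using h _ _ _ _ hσ hj

lemma IsTP2.mul_permProd_lt (h : A.IsTP2 C) (hA : ∀ i j, 0 < A i j) :
    C * A.permProd σ < A.permProd (σ * Equiv.swap j j') := by
  rw [permProd_mul_swap A σ hj.ne, permProd_eq_mul_prod_compl A σ hj.ne, ← mul_assoc]
  refine mul_lt_mul_of_pos_right ?_ (prod_pos fun _ _ => hA _ _)
  simpa only [mul_comm (A (σ j) j)] using h _ _ _ _ hσ hj

end swap

lemma IsTN2.mul_permProd_le_sum_swap (h : A.IsTN2 C) (hA : ∀ i j, 0 ≤ A i j) {σ : Perm α}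
    (hσ : σ ≠ 1) :
    C * A.permProd σ ≤ ∑ q : α × α with q.1 < q.2, A.permProd (σ * Equiv.swap q.1 q.2) := by
  obtain ⟨j, j', hj, hinv⟩ := Perm.exists_inversion_of_ne_one hσ
  refine (h.mul_permProd_le hj hinv hA).trans ?_
  exact single_le_sum (f := fun q : α × α => A.permProd (σ * Equiv.swap q.1 q.2))
    (fun _ _ => permProd_nonneg hA _) (a := (j, j')) (mem_filter.2 ⟨mem_univ _, hj⟩)

lemma IsTP2.mul_permProd_lt_sum_swap (h : A.IsTP2 C) (hA : ∀ i j, 0 < A i j) {σ : Perm α}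
    (hσ : σ ≠ 1) :
    C * A.permProd σ < ∑ q : α × α with q.1 < q.2, A.permProd (σ * Equiv.swap q.1 q.2) := by
  obtain ⟨j, j', hj, hinv⟩ := Perm.exists_inversion_of_ne_one hσ
  refine (h.mul_permProd_lt hj hinv hA).trans_le ?_
  exact single_le_sum (f := fun q : α × α => A.permProd (σ * Equiv.swap q.1 q.2))
    (fun _ _ => (permProd_pos hA _).le) (a := (j, j')) (mem_filter.2 ⟨mem_univ _, hj⟩)

lemma sum_sign_eq_neg_one_sum_permProd_mul_swap_le (hA : ∀ i j, 0 ≤ A i j)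
    (hC : ((Fintype.card α).choose 2 : R) ≤ C) :
    ∑ σ with Perm.sign σ = -1, ∑ q : α × α with q.1 < q.2, A.permProd (σ * Equiv.swap q.1 q.2) ≤
      C * ∑ σ with Perm.sign σ = 1, A.permProd σ := by
  rw [Perm.sum_sign_eq_neg_one_sum_swap, nsmul_eq_mul]
  exact mul_le_mul_of_nonneg_right hC (sum_nonneg fun σ _ => permProd_nonneg hA σ)

theorem IsTN2.det_nonneg (h : A.IsTN2 C) (hA : ∀ i j, 0 ≤ A i j) (hC0 : 0 < C)
    (hC : ((Fintype.card α).choose 2 : R) ≤ C) : 0 ≤ A.det := by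
  have hodd : C * ∑ σ with Perm.sign σ = -1, A.permProd σ ≤
      C * ∑ σ with Perm.sign σ = 1, A.permProd σ := by
    rw [mul_sum]
    refine (sum_le_sum fun σ hσ => ?_).trans
      (sum_sign_eq_neg_one_sum_permProd_mul_swap_le hA hC)
    exact h.mul_permProd_le_sum_swap hA (Perm.ne_one_of_sign_eq_neg_one (mem_filter.1 hσ).2)
  rw [det_eq_sum_sign_eq_one_sub_sum_sign_eq_neg_one, sub_nonneg]
  exact le_of_mul_le_mul_left hodd hC0

theorem IsTP2.det_pos (h : A.IsTP2 C) (hA : ∀ i j, 0 < A i j) (hC0 : 0 < C)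
    (hC : ((Fintype.card α).choose 2 : R) ≤ C) : 0 < A.det := by
  rw [det_eq_sum_sign_eq_one_sub_sum_sign_eq_neg_one, sub_pos]
  rcases (univ.filter fun σ : Perm α => Perm.sign σ = -1).eq_empty_or_nonempty with hempty | hodd
  · rw [hempty, sum_empty]
    exact sum_pos (fun σ _ => permProd_pos hA σ) ⟨1, by simp⟩
  refine lt_of_mul_lt_mul_left ?_ hC0.le
  rw [mul_sum]
  refine (sum_lt_sum_of_nonempty hodd fun σ hσ => ?_).trans_le
    (sum_sign_eq_neg_one_sum_permProd_mul_swap_le (fun i j => (hA i j).le) hC)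
  exact h.mul_permProd_lt_sum_swap hA (Perm.ne_one_of_sign_eq_neg_one (mem_filter.1 hσ).2)

end Matrix

/-- A positive n×n matrix in TN_{2,C} with C ≥ (n-1)² has nonnegative determinant,
and positive determinant when the inequalities are strict. -/
theorem det_nonneg_of_TN2C (n : ℕ) (hn : 2 ≤ n) (C : ℝ) (hC : ((n : ℝ) - 1) ^ 2 ≤ C)
    (A : Matrix (Fin n) (Fin n) ℝ) (hpos : ∀ i j, 0 < A i j)
    (h : ∀ i i' j j' : Fin n, i < i' → j < j' → C * (A i j' * A i' j) ≤ A i j * A i' j') :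
    0 ≤ A.det ∧
      ((∀ i i' j j' : Fin n, i < i' → j < j' → C * (A i j' * A i' j) < A i j * A i' j') →
        0 < A.det) := by
  have hn' : (2 : ℝ) ≤ n := by exact_mod_cast hn
  have hC0 : 0 < C := by nlinarith
  have hCn : ((Fintype.card (Fin n)).choose 2 : ℝ) ≤ C := by
    rw [Fintype.card_fin, Nat.cast_choose_two]
    nlinarith
  exact ⟨Matrix.IsTN2.det_nonneg h (fun i j => (hpos i j).le) hC0 hCn,
    fun hstrict => Matrix.IsTP2.det_pos hstrict hpos hC0 hCn⟩
end

section
/- Let n, m ≥ 2 and C ≥ (min(n,m)-1)². If A is a real n×m matrix with positive entries such that A(i,j)·A(i',j') ≥ C·A(i,j')·A(i',j) for all i < i' and j < j', then A is totally nonnegative, i.e., every minor of A is nonnegative. If the defining inequalities are strict, then A is totally positive. -/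
/-!
Expand the determinant of a square submatrix `B` over permutations. A permutation `σ` with `N`
inversions is sorted by `N` adjacent transpositions, each of which costs one application of the
`2 × 2` inequality, so `∏ B i (σ i) ≤ C⁻¹ ^ N * ∏ B i i`. Since `σ` is determined by its set of
inversions, `∑ σ, C⁻¹ ^ N(σ) ≤ (1 + C⁻¹) ^ (k choose 2) ≤ 2` once `C ≥ (k - 1) ^ 2`, so the
diagonal term outweighs all the others together.
-/

open Finset Equiv

theorem one_add_pow_choose_two_le_two {k : ℕ} {q : ℝ} (hq : 0 ≤ q)
    (hqk : q * ((k : ℝ) - 1) ^ 2 ≤ 1) : (1 + q) ^ k.choose 2 ≤ 2 := by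
  rcases lt_or_ge k 4 with hk | hk
  · interval_cases k <;> norm_num at hqk ⊢
    · linarith
    · nlinarith [pow_le_pow_left₀ (by linarith) (by linarith : 1 + q ≤ 5 / 4) 3]
  have hk' : (4 : ℝ) ≤ k := mod_cast hk
  -- `(k choose 2) q ≤ k / (2 (k - 1)) ≤ 2 / 3 < log 2`
  have hexp : (k.choose 2 : ℝ) * q ≤ Real.log 2 := by
    rw [Nat.cast_choose_two]
    nlinarith [Real.log_two_gt_d9, mul_le_mul_of_nonneg_right
      (by linarith : (k : ℝ) ≤ 4 / 3 * (k - 1)) (by nlinarith : 0 ≤ (k - 1 : ℝ) * q)]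
  calc (1 + q) ^ k.choose 2 ≤ Real.exp q ^ k.choose 2 :=
        pow_le_pow_left₀ (by linarith) (by linarith [Real.add_one_le_exp q]) _
    _ = Real.exp (k.choose 2 * q) := (Real.exp_nat_mul q _).symm
    _ ≤ Real.exp (Real.log 2) := Real.exp_le_exp.2 hexp
    _ = 2 := Real.exp_log two_pos

namespace Equiv.Perm

section LinearOrder

variable {α : Type*} [LinearOrder α] [Fintype α]

def inversions (σ : Perm α) : Finset (α × α) :=
  {p | p.1 < p.2 ∧ σ p.2 < σ p.1}

theorem mem_inversions {σ : Perm α} {p : α × α} :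
    p ∈ σ.inversions ↔ p.1 < p.2 ∧ σ p.2 < σ p.1 := by
  simp [inversions]

theorem inversions_subset (σ : Perm α) :
    σ.inversions ⊆ ({p | p.1 < p.2} : Finset (α × α)) :=
  fun _ hp => by simpa using (mem_inversions.1 hp).1

theorem lt_iff_lt_of_inversions_eq {σ τ : Perm α} (h : σ.inversions = τ.inversions)
    (a b : α) : σ a < σ b ↔ τ a < τ b := by
  have key : ∀ π : Perm α, a < b → (π a < π b ↔ (a, b) ∉ π.inversions) := fun π hab => by
    rw [mem_inversions, not_and, not_lt, imp_iff_right hab]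
    exact (π.injective.ne hab.ne).le_iff_lt.symm
  have key' : ∀ π : Perm α, b < a → (π a < π b ↔ (b, a) ∈ π.inversions) := fun π hab => by
    simp [mem_inversions, hab]
  rcases lt_trichotomy a b with hab | rfl | hab
  · rw [key σ hab, key τ hab, h]
  · simp
  · rw [key' σ hab, key' τ hab, h]

theorem inversions_injective : Function.Injective (inversions : Perm α → Finset (α × α)) := by
  intro σ τ h
  have hmono : StrictMono (τ ∘ σ.symm) := fun x y hxy => by
    simpa using (lt_iff_lt_of_inversions_eq h (σ.symm x) (σ.symm y)).1 (by simpa using hxy)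
  ext x
  simpa using (congrFun hmono.eq_id (σ x)).symm

@[simp] theorem inversions_one : (1 : Perm α).inversions = ∅ := by
  ext p
  simpa [mem_inversions] using le_of_lt

theorem inversions_eq_empty_iff {σ : Perm α} : σ.inversions = ∅ ↔ σ = 1 :=
  ⟨fun h => inversions_injective (h.trans inversions_one.symm), fun h => h ▸ inversions_one⟩

theorem sum_pow_card_inversions_le {R : Type*} [CommSemiring R] [PartialOrder R]
    [IsOrderedRing R] {q : R} (hq : 0 ≤ q) :
    ∑ σ : Perm α, q ^ #σ.inversions ≤ (1 + q) ^ (Fintype.card α).choose 2 := by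
  rw [← Fintype.card_product_filter_lt, add_comm, ← sum_pow_mul_eq_add_pow]
  simp only [one_pow, mul_one]
  rw [← sum_image (f := fun t => q ^ #t) fun σ _ τ _ h => inversions_injective h]
  exact sum_le_sum_of_subset_of_nonneg
    (image_subset_iff.2 fun σ _ => mem_powerset.2 (inversions_subset σ))
    fun _ _ _ => pow_nonneg hq _

theorem sum_inv_pow_card_inversions_erase_one_le {C : ℝ}
    (hC : ((Fintype.card α : ℝ) - 1) ^ 2 ≤ C) :
    ∑ σ ∈ univ.erase (1 : Perm α), C⁻¹ ^ #σ.inversions ≤ 1 := by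
  have hC0 : 0 ≤ C := (sq_nonneg _).trans hC
  have htotal := (sum_pow_card_inversions_le (α := α) (inv_nonneg.2 hC0)).trans
    (one_add_pow_choose_two_le_two (inv_nonneg.2 hC0) (inv_mul_le_one_of_le₀ hC hC0))
  rw [← add_sum_erase _ _ (mem_univ 1)] at htotal
  simp only [inversions_one, card_empty, pow_zero] at htotal
  linarith

end LinearOrder

theorem prod_mul_swap_mul_eq {α β : Type*} [Fintype α] [DecidableEq α] [CommMonoid β]
    (f : α → α → β) (σ : Perm α) {i j : α} (hij : i ≠ j) :
    (∏ x, f x ((σ * swap i j) x)) * (f i (σ i) * f j (σ j)) =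
      (∏ x, f x (σ x)) * (f i (σ j) * f j (σ i)) := by
  have hrest : ∏ x ∈ {i, j}ᶜ, f x ((σ * swap i j) x) = ∏ x ∈ {i, j}ᶜ, f x (σ x) :=
    prod_congr rfl fun x hx => by
      simp only [mem_compl, mem_insert, mem_singleton, not_or] at hx
      rw [mul_apply, swap_apply_of_ne_of_ne hx.1 hx.2]
  rw [← prod_mul_prod_compl {i, j}, ← prod_mul_prod_compl {i, j} (fun x => f x (σ x)),
    prod_pair hij, prod_pair hij, hrest]
  simp only [mul_apply, swap_apply_left, swap_apply_right]
  ac_rfl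

section Fin

variable {k : ℕ}

theorem swap_lt_swap_iff_of_val_eq_succ {i j a b : Fin k} (hij : j.val = i.val + 1)
    (h₁ : (a, b) ≠ (i, j)) (h₂ : (a, b) ≠ (j, i)) : swap i j a < swap i j b ↔ a < b := by
  simp only [ne_eq, Prod.mk.injEq, not_and] at h₁ h₂
  simp only [swap_apply_def]
  split_ifs <;> simp only [Fin.lt_def, Fin.ext_iff] at * <;> omega

theorem exists_descent_of_ne_one {σ : Perm (Fin k)} (hσ : σ ≠ 1) :
    ∃ i j : Fin k, j.val = i.val + 1 ∧ σ j < σ i := by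
  by_contra! h
  refine hσ (Perm.ext fun x => ?_)
  obtain _ | k := k
  · exact x.elim0
  have hmono : StrictMono σ := Fin.strictMono_iff_lt_succ.2 fun i =>
    (h i.castSucc i.succ rfl).lt_of_ne (σ.injective.ne Fin.castSucc_lt_succ.ne)
  exact congrFun hmono.eq_id x

theorem two_le_of_ne_one {σ : Perm (Fin k)} (hσ : σ ≠ 1) : 2 ≤ k := by
  obtain ⟨i, j, hij, -⟩ := exists_descent_of_ne_one hσ
  have := j.isLt
  omega

theorem card_inversions_mul_swap_add_one {σ : Perm (Fin k)} {i j : Fin k}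
    (hij : j.val = i.val + 1) (hσ : σ j < σ i) :
    #(σ * swap i j).inversions + 1 = #σ.inversions := by
  -- swapping the adjacent positions `i, j` changes the relative order of the pair `(i, j)` only
  have hlt : i < j := by rw [Fin.lt_def]; omega
  have hmem : (i, j) ∈ σ.inversions := mem_inversions.2 ⟨hlt, hσ⟩
  suffices (σ * swap i j).inversions = (σ.inversions.erase (i, j)).map
      ((swap i j).prodCongr (swap i j)).toEmbedding by
    rw [this, card_map, card_erase_add_one hmem]
  ext ⟨a, b⟩
  rw [mem_map_equiv, mem_erase, mem_inversions, mem_inversions]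
  simp only [prodCongr_symm, symm_swap, prodCongr_apply, Prod.map, mul_apply]
  rcases eq_or_ne (a, b) (i, j) with h | h₁
  · obtain ⟨rfl, rfl⟩ := Prod.mk.inj h
    simp [hσ.not_gt, hlt.not_gt]
  rcases eq_or_ne (a, b) (j, i) with h | h₂
  · obtain ⟨rfl, rfl⟩ := Prod.mk.inj h
    simp [hlt.not_gt]
  have hne : ((swap i j) a, (swap i j) b) ≠ (i, j) := by
    simpa [swap_apply_eq_iff] using h₂
  rw [swap_lt_swap_iff_of_val_eq_succ hij h₁ h₂]
  simp only [ne_eq, hne, not_false_eq_true, true_and]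

end Fin

end Equiv.Perm

namespace Matrix

def IsTN2C {ι κ : Type*} [LT ι] [LT κ] (C : ℝ) (A : Matrix ι κ ℝ) : Prop :=
  ∀ i i' j j', i < i' → j < j' → C * (A i j' * A i' j) ≤ A i j * A i' j'

def IsStrictTN2C {ι κ : Type*} [LT ι] [LT κ] (C : ℝ) (A : Matrix ι κ ℝ) : Prop :=
  ∀ i i' j j', i < i' → j < j' → C * (A i j' * A i' j) < A i j * A i' j'

section Submatrix

variable {ι κ ι' κ' : Type*} [Preorder ι] [Preorder κ] [Preorder ι'] [Preorder κ']
  {C : ℝ} {A : Matrix ι κ ℝ} {r : ι' → ι} {c : κ' → κ}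

theorem IsStrictTN2C.isTN2C (hA : A.IsStrictTN2C C) : A.IsTN2C C :=
  fun _ _ _ _ hi hj => (hA _ _ _ _ hi hj).le

theorem IsTN2C.submatrix (hA : A.IsTN2C C) (hr : StrictMono r) (hc : StrictMono c) :
    (A.submatrix r c).IsTN2C C :=
  fun _ _ _ _ hi hj => hA _ _ _ _ (hr hi) (hc hj)

theorem IsStrictTN2C.submatrix (hA : A.IsStrictTN2C C) (hr : StrictMono r) (hc : StrictMono c) :
    (A.submatrix r c).IsStrictTN2C C :=
  fun _ _ _ _ hi hj => hA _ _ _ _ (hr hi) (hc hj)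

end Submatrix

theorem prod_diag_sub_sum_le_det {n R : Type*} [Fintype n] [DecidableEq n] [CommRing R]
    [LinearOrder R] [IsStrictOrderedRing R] (B : Matrix n n R) (hB : ∀ i j, 0 ≤ B i j) :
    ∏ i, B i i - ∑ σ ∈ univ.erase (1 : Perm n), ∏ i, B i (σ i) ≤ B.det := by
  rw [← det_transpose, det_apply, ← add_sum_erase _ _ (mem_univ 1), sub_eq_add_neg,
    ← sum_neg_distrib]
  simp only [transpose_apply, Perm.sign_one, one_smul, Perm.one_apply]
  gcongr with σ
  have hP : 0 ≤ ∏ i, B i (σ i) := prod_nonneg fun i _ => hB _ _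
  rcases Int.units_eq_one_or (Perm.sign σ) with h | h <;> simp [h, hP]

section Square

variable {k : ℕ} {C : ℝ} {B : Matrix (Fin k) (Fin k) ℝ}

theorem IsTN2C.mul_prod_le_prod_mul_swap (hpos : ∀ i j, 0 < B i j) (hB : B.IsTN2C C)
    {σ : Perm (Fin k)} {i j : Fin k} (hij : i < j) (hσ : σ j < σ i) :
    C * ∏ x, B x (σ x) ≤ ∏ x, B x ((σ * Equiv.swap i j) x) := by
  have hP : 0 < ∏ x, B x (σ x) := prod_pos fun x _ => hpos _ _
  refine le_of_mul_le_mul_right ?_ (mul_pos (hpos i (σ i)) (hpos j (σ j)))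
  rw [Perm.prod_mul_swap_mul_eq B σ hij.ne]
  linarith [mul_le_mul_of_nonneg_left (hB i j (σ j) (σ i) hij hσ) hP.le]

theorem IsStrictTN2C.mul_prod_lt_prod_mul_swap (hpos : ∀ i j, 0 < B i j)
    (hB : B.IsStrictTN2C C) {σ : Perm (Fin k)} {i j : Fin k} (hij : i < j) (hσ : σ j < σ i) :
    C * ∏ x, B x (σ x) < ∏ x, B x ((σ * Equiv.swap i j) x) := by
  have hP : 0 < ∏ x, B x (σ x) := prod_pos fun x _ => hpos _ _
  refine lt_of_mul_lt_mul_right ?_ (mul_pos (hpos i (σ i)) (hpos j (σ j))).le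
  rw [Perm.prod_mul_swap_mul_eq B σ hij.ne]
  linarith [mul_lt_mul_of_pos_left (hB i j (σ j) (σ i) hij hσ) hP]

theorem IsTN2C.pow_card_inversions_mul_prod_le (hC : 0 ≤ C) (hpos : ∀ i j, 0 < B i j)
    (hB : B.IsTN2C C) (σ : Perm (Fin k)) :
    C ^ #σ.inversions * ∏ x, B x (σ x) ≤ ∏ x, B x x := by
  induction hN : #σ.inversions generalizing σ with
  | zero =>
    rw [card_eq_zero, Perm.inversions_eq_empty_iff] at hN
    simp [hN]
  | succ N ih =>
    obtain ⟨i, j, hij, hσ⟩ := Perm.exists_descent_of_ne_one (σ := σ) (by rintro rfl; simp at hN)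
    have hcard := Perm.card_inversions_mul_swap_add_one hij hσ
    calc C ^ (N + 1) * ∏ x, B x (σ x) = C ^ N * (C * ∏ x, B x (σ x)) := by ring
      _ ≤ C ^ N * ∏ x, B x ((σ * Equiv.swap i j) x) := by
        gcongr
        exact hB.mul_prod_le_prod_mul_swap hpos (Fin.lt_def.2 (by omega)) hσ
      _ ≤ ∏ x, B x x := ih _ (by omega)

theorem IsStrictTN2C.pow_card_inversions_mul_prod_lt (hC : 0 < C) (hpos : ∀ i j, 0 < B i j)
    (hB : B.IsStrictTN2C C) {σ : Perm (Fin k)} (hσ₁ : σ ≠ 1) :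
    C ^ #σ.inversions * ∏ x, B x (σ x) < ∏ x, B x x := by
  obtain ⟨i, j, hij, hσ⟩ := Perm.exists_descent_of_ne_one hσ₁
  rw [← Perm.card_inversions_mul_swap_add_one hij hσ, pow_succ, mul_assoc]
  calc _ < C ^ #(σ * Equiv.swap i j).inversions * ∏ x, B x ((σ * Equiv.swap i j) x) := by
        gcongr
        exact hB.mul_prod_lt_prod_mul_swap hpos (Fin.lt_def.2 (by omega)) hσ
    _ ≤ ∏ x, B x x := hB.isTN2C.pow_card_inversions_mul_prod_le hC.le hpos _

theorem IsTN2C.det_nonneg (hC : ((k : ℝ) - 1) ^ 2 ≤ C) (hpos : ∀ i j, 0 < B i j)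
    (hB : B.IsTN2C C) : 0 ≤ B.det := by
  have hD : 0 < ∏ x, B x x := prod_pos fun x _ => hpos x x
  have hdet := B.prod_diag_sub_sum_le_det fun i j => (hpos i j).le
  rcases (univ.erase (1 : Perm (Fin k))).eq_empty_or_nonempty with hempty | ⟨σ₁, hσ₁⟩
  · rw [hempty, sum_empty] at hdet
    linarith
  have hC0 : 0 < C := by
    have : (2 : ℝ) ≤ k := mod_cast Perm.two_le_of_ne_one (ne_of_mem_erase hσ₁)
    nlinarith
  have hterm : ∀ σ ∈ univ.erase (1 : Perm (Fin k)),
      ∏ x, B x (σ x) ≤ C⁻¹ ^ #σ.inversions * ∏ x, B x x := fun σ _ => by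
    rw [inv_pow, inv_mul_eq_div, le_div_iff₀' (pow_pos hC0 _)]
    exact hB.pow_card_inversions_mul_prod_le hC0.le hpos σ
  have hsum := mul_le_of_le_one_left hD.le
    (Perm.sum_inv_pow_card_inversions_erase_one_le (α := Fin k) (C := C)
      (by rwa [Fintype.card_fin]))
  rw [sum_mul] at hsum
  linarith [sum_le_sum hterm]

theorem IsStrictTN2C.det_pos (hC : ((k : ℝ) - 1) ^ 2 ≤ C) (hpos : ∀ i j, 0 < B i j)
    (hB : B.IsStrictTN2C C) : 0 < B.det := by
  have hD : 0 < ∏ x, B x x := prod_pos fun x _ => hpos x x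
  have hdet := B.prod_diag_sub_sum_le_det fun i j => (hpos i j).le
  rcases (univ.erase (1 : Perm (Fin k))).eq_empty_or_nonempty with hempty | hne
  · rw [hempty, sum_empty] at hdet
    linarith
  have hC0 : 0 < C := by
    have : (2 : ℝ) ≤ k := mod_cast Perm.two_le_of_ne_one (ne_of_mem_erase hne.choose_spec)
    nlinarith
  have hterm : ∀ σ ∈ univ.erase (1 : Perm (Fin k)),
      ∏ x, B x (σ x) < C⁻¹ ^ #σ.inversions * ∏ x, B x x := fun σ hσ => by
    rw [inv_pow, inv_mul_eq_div, lt_div_iff₀' (pow_pos hC0 _)]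
    exact hB.pow_card_inversions_mul_prod_lt hC0 hpos (ne_of_mem_erase hσ)
  have hsum := mul_le_of_le_one_left hD.le
    (Perm.sum_inv_pow_card_inversions_erase_one_le (α := Fin k) (C := C)
      (by rwa [Fintype.card_fin]))
  rw [sum_mul] at hsum
  linarith [sum_lt_sum_of_nonempty hne hterm]

end Square

end Matrix

theorem totally_nonneg_of_TN2C_general (n m : ℕ) (C : ℝ)
    (hC : ((min n m : ℕ) - 1 : ℝ) ^ 2 ≤ C)
    (A : Matrix (Fin n) (Fin m) ℝ) (hpos : ∀ i j, 0 < A i j)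
    (h : ∀ (i i' : Fin n) (j j' : Fin m), i < i' → j < j' →
      C * (A i j' * A i' j) ≤ A i j * A i' j') :
    (∀ (k : ℕ) (r : Fin k → Fin n) (c : Fin k → Fin m), StrictMono r → StrictMono c →
      0 ≤ (A.submatrix r c).det) ∧
    ((∀ (i i' : Fin n) (j j' : Fin m), i < i' → j < j' →
        C * (A i j' * A i' j) < A i j * A i' j') →
      ∀ (k : ℕ) (r : Fin k → Fin n) (c : Fin k → Fin m), StrictMono r → StrictMono c →
        0 < (A.submatrix r c).det) := by
  have hsize : ∀ {k : ℕ} {r : Fin k → Fin n} {c : Fin k → Fin m}, StrictMono r →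
      StrictMono c → 0 < k → ((k : ℝ) - 1) ^ 2 ≤ C := by
    intro k r c hr hc hk
    have hk₁ : (1 : ℝ) ≤ k := mod_cast hk
    have hkmin : (k : ℝ) ≤ (min n m : ℕ) :=
      mod_cast le_min (Fin.le_of_injective r hr.injective) (Fin.le_of_injective c hc.injective)
    exact le_trans (pow_le_pow_left₀ (by linarith) (by linarith) 2) hC
  refine ⟨fun k r c hr hc => ?_, fun hstrict k r c hr hc => ?_⟩
  · obtain rfl | hk := k.eq_zero_or_pos
    · simp
    exact (Matrix.IsTN2C.submatrix h hr hc).det_nonneg (hsize hr hc hk) fun _ _ => hpos _ _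
  · obtain rfl | hk := k.eq_zero_or_pos
    · simp
    exact (Matrix.IsStrictTN2C.submatrix hstrict hr hc).det_pos (hsize hr hc hk)
      fun _ _ => hpos _ _

/-- A positive n×m matrix in TN_{2,C} with C ≥ (min(n,m)-1)² is totally nonnegative,
and totally positive when the defining inequalities are strict. -/
theorem totally_nonneg_of_TN2C (n m : ℕ) (hn : 2 ≤ n) (hm : 2 ≤ m) (C : ℝ)
    (hC : ((min n m : ℕ) - 1 : ℝ) ^ 2 ≤ C)
    (A : Matrix (Fin n) (Fin m) ℝ) (hpos : ∀ i j, 0 < A i j)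
    (h : ∀ (i i' : Fin n) (j j' : Fin m), i < i' → j < j' →
      C * (A i j' * A i' j) ≤ A i j * A i' j') :
    (∀ (k : ℕ) (r : Fin k → Fin n) (c : Fin k → Fin m), StrictMono r → StrictMono c →
      0 ≤ (A.submatrix r c).det) ∧
    ((∀ (i i' : Fin n) (j j' : Fin m), i < i' → j < j' →
        C * (A i j' * A i' j) < A i j * A i' j') →
      ∀ (k : ℕ) (r : Fin k → Fin n) (c : Fin k → Fin m), StrictMono r → StrictMono c →
        0 < (A.submatrix r c).det) :=
  totally_nonneg_of_TN2C_general n m C hC A hpos h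
end

section
/- A real n×m matrix A is a Monge matrix if and only if there exist a staircase matrix S (a nonnegative linear combination of the elementary staircase matrices L^{(i,j)} for 2 ≤ i ≤ n, 2 ≤ j ≤ m) and vectors u ∈ ℝⁿ, v ∈ ℝᵐ such that A(i,j) = S(i,j) + u(i) + v(j) for all i, j. -/
/-!
The coefficient of `L^{(i,j)}` is taken to be the mixed difference
`A i j - A (i-1) j - A i (j-1) + A (i-1) (j-1)`, which is nonnegative when `A` is Monge.
Telescoping in both indices turns the staircase matrix with these coefficients into
`A t s - A t 0 - A 0 s + A 0 0`, so `u t = A t 0` and `v s = A 0 s - A 0 0` complete the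
decomposition. Conversely, elementary staircase matrices and matrices `u i + v j` are Monge, and
sums of Monge matrices are Monge.
-/

open Finset

section Monge

variable {ι κ β : Type*} [Preorder ι] [Preorder κ] [AddCommGroup β] [PartialOrder β]

def IsMonge (A : ι → κ → β) : Prop :=
  ∀ i i' j j', i < i' → j < j' → A i j' + A i' j ≤ A i j + A i' j'

theorem isMonge_sum [IsOrderedAddMonoid β] {α : Type*} (s : Finset α) {A : α → ι → κ → β}
    (hA : ∀ a ∈ s, IsMonge (A a)) : IsMonge fun i j => ∑ a ∈ s, A a i j := by
  intro i i' j j' hi hj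
  simp only [← sum_add_distrib]
  exact sum_le_sum fun a ha => hA a ha i i' j j' hi hj

theorem IsMonge.add_add [IsOrderedAddMonoid β] {A : ι → κ → β} (hA : IsMonge A)
    (u : ι → β) (v : κ → β) : IsMonge fun i j => A i j + u i + v j := by
  intro i i' j j' hi hj
  dsimp only
  convert add_le_add_left (hA i i' j j' hi hj) (u i + u i' + v j + v j') using 1 <;> abel

theorem isMonge_ite_le_and_le [DecidableLE ι] [DecidableLE κ] (a : ι) (b : κ) {c : β}
    (hc : 0 ≤ c) : IsMonge fun t s => if a ≤ t ∧ b ≤ s then c else 0 := by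
  intro i i' j j' hi hj
  have hi' : a ≤ i → a ≤ i' := fun h => h.trans hi.le
  have hj' : b ≤ j → b ≤ j' := fun h => h.trans hj.le
  dsimp only
  split_ifs <;> simp_all

end Monge

section Staircase

variable {β : Type*} [AddCommGroup β] {n m : ℕ}

theorem Finset.sum_Ioc_sub_pred (G : ℕ → β) (t : ℕ) :
    ∑ i ∈ Ioc 0 t, (G i - G (i - 1)) = G t - G 0 := by
  induction t with
  | zero => simp
  | succ t ih => rw [sum_Ioc_succ_top t.zero_le, ih, Nat.add_sub_cancel]; abel

theorem Fin.sum_ite_one_le_le_sub_pred (G : ℕ → β) (t : Fin n) :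
    ∑ i : Fin n, (if 1 ≤ (i : ℕ) ∧ i ≤ t then G i - G (i - 1) else 0) = G t - G 0 := by
  simp only [Fin.le_def]
  rw [Fin.sum_univ_eq_sum_range (fun i => if 1 ≤ i ∧ i ≤ t then G i - G (i - 1) else 0),
    ← sum_filter, ← sum_Ioc_sub_pred]
  congr 1
  ext i
  simp only [mem_filter, mem_range, mem_Ioc]
  omega

def staircase (c : Fin n → Fin m → β) (t : Fin n) (s : Fin m) : β :=
  ∑ i : Fin n, ∑ j : Fin m, if 1 ≤ (i : ℕ) ∧ 1 ≤ (j : ℕ) ∧ i ≤ t ∧ j ≤ s then c i j else 0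

theorem isMonge_staircase [PartialOrder β] [IsOrderedAddMonoid β] {c : Fin n → Fin m → β}
    (hc : ∀ i j, 0 ≤ c i j) : IsMonge (staircase c) := by
  refine isMonge_sum _ fun i _ => isMonge_sum _ fun j _ => ?_
  by_cases hij : 1 ≤ (i : ℕ) ∧ 1 ≤ (j : ℕ)
  · simpa only [hij.1, hij.2, true_and] using isMonge_ite_le_and_le i j (hc i j)
  · have hfalse (t : Fin n) (s : Fin m) : ¬(1 ≤ (i : ℕ) ∧ 1 ≤ (j : ℕ) ∧ i ≤ t ∧ j ≤ s) := by
      tauto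
    simp only [hfalse, if_false]
    exact fun _ _ _ _ _ _ => le_rfl

/-- By truncated subtraction, `mixedDiff g 0 j = mixedDiff g i 0 = 0`. -/
def mixedDiff (g : ℕ → ℕ → β) (i j : ℕ) : β :=
  g i j - g (i - 1) j - g i (j - 1) + g (i - 1) (j - 1)

theorem staircase_mixedDiff (g : ℕ → ℕ → β) (t : Fin n) (s : Fin m) :
    staircase (fun i j => mixedDiff g i j) t s = g t s - g t 0 - g 0 s + g 0 0 := by
  have row (i : Fin n) : (∑ j : Fin m,
      if 1 ≤ (i : ℕ) ∧ 1 ≤ (j : ℕ) ∧ i ≤ t ∧ j ≤ s then mixedDiff g i j else 0) =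
      if 1 ≤ (i : ℕ) ∧ i ≤ t then (g i s - g i 0) - (g (i - 1) s - g (i - 1) 0) else 0 := by
    split_ifs with hi
    · simp only [hi.1, hi.2, true_and]
      convert Fin.sum_ite_one_le_le_sub_pred (fun j => g i j - g (i - 1) j) s using 1
      · refine sum_congr rfl fun j _ => ?_
        split_ifs
        · simp only [mixedDiff]; abel
        · rfl
      · abel
    · exact sum_eq_zero fun j _ => if_neg (by tauto)
  rw [staircase, sum_congr rfl fun i _ => row i,
    Fin.sum_ite_one_le_le_sub_pred (fun i => g i s - g i 0) t]
  abel

def extendByZero (A : Fin n → Fin m → β) (i j : ℕ) : β :=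
  if h : i < n ∧ j < m then A ⟨i, h.1⟩ ⟨j, h.2⟩ else 0

theorem extendByZero_apply (A : Fin n → Fin m → β) (t : Fin n) (s : Fin m) :
    extendByZero A t s = A t s := by
  simp [extendByZero]

theorem IsMonge.mixedDiff_extendByZero_nonneg [PartialOrder β] [IsOrderedAddMonoid β]
    {A : Fin n → Fin m → β} (hA : IsMonge A) (i : Fin n) (j : Fin m) :
    0 ≤ mixedDiff (extendByZero A) i j := by
  rcases Nat.eq_zero_or_pos i with hi | hi
  · simp [mixedDiff, hi]
  rcases Nat.eq_zero_or_pos j with hj | hj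
  · simp [mixedDiff, hj]
  set i₀ : Fin n := ⟨i - 1, by omega⟩
  set j₀ : Fin m := ⟨j - 1, by omega⟩
  have hmonge := hA i₀ i j₀ j (Fin.lt_def.mpr (by simp [i₀]; omega))
    (Fin.lt_def.mpr (by simp [j₀]; omega))
  have e₁ : extendByZero A (i - 1) j = A i₀ j := extendByZero_apply A i₀ j
  have e₂ : extendByZero A i (j - 1) = A i j₀ := extendByZero_apply A i j₀
  have e₃ : extendByZero A (i - 1) (j - 1) = A i₀ j₀ := extendByZero_apply A i₀ j₀
  rw [mixedDiff, e₁, e₂, e₃, extendByZero_apply]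
  calc (0 : β) ≤ A i₀ j₀ + A i j - (A i₀ j + A i j₀) := sub_nonneg.mpr hmonge
    _ = A i j - A i₀ j - A i j₀ + A i₀ j₀ := by abel

end Staircase

/-- A real n×m matrix is Monge iff it decomposes as a staircase matrix (a nonnegative
combination of elementary staircase matrices L^{(i,j)}, i,j ≥ 1 in 0-indexed terms)
plus a matrix of the form u(i) + v(j). -/
theorem monge_iff_staircase_decomposition (n m : ℕ) (A : Fin n → Fin m → ℝ) :
    (∀ (i i' : Fin n) (j j' : Fin m), i < i' → j < j' →
        A i j' + A i' j ≤ A i j + A i' j') ↔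
      ∃ (c : Fin n → Fin m → ℝ) (u : Fin n → ℝ) (v : Fin m → ℝ),
        (∀ i j, 0 ≤ c i j) ∧
        ∀ t s, A t s =
          (∑ i : Fin n, ∑ j : Fin m,
            if 1 ≤ (i : ℕ) ∧ 1 ≤ (j : ℕ) ∧ i ≤ t ∧ j ≤ s then c i j else 0)
          + u t + v s := by
  constructor
  · intro hA
    refine ⟨fun i j => mixedDiff (extendByZero A) i j, fun t => extendByZero A t 0,
      fun s => extendByZero A 0 s - extendByZero A 0 0,
      IsMonge.mixedDiff_extendByZero_nonneg hA, fun t s => ?_⟩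
    change A t s = staircase _ t s + _ + _
    rw [staircase_mixedDiff, extendByZero_apply]
    ring
  · rintro ⟨c, u, v, hc, hdecomp⟩
    obtain rfl : A = fun t s => staircase c t s + u t + v s := funext₂ hdecomp
    exact (isMonge_staircase hc).add_add u v
end
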